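/- In the inadvertent-setting Markov chain of token holdings under the threshold-k strategy, posting transitions are reversible: if state s' is obtained from s by the poster i giving one token to agent j (where j has fewer than k + 1/b tokens in s), then the transition probability from s to s' equals the transition probability from s' to s, both equal to 1/(n·m) where m is the number of agents other than the payer with fewer than k + 1/b tokens. -/

import Mathlib

/-!
A transfer determines its payer and its recipient, so the double sum defining `P(s, s')` has
the single nonzero term `1/(n·m)`. The reverse move `s' → s` is the transfer from `j` back to
`i`, and the transposition `i ↔ j` matches the recipients available to payer `i` in `s` with
those available to payer `j` in `s'`, so `P(s', s)` has the same `m`.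
-/

open Finset

/-- Transition kernel of the posting move: a poster `i` is chosen uniformly among the
`n` agents; if `i` has at least one token, a recipient `j` is chosen uniformly among
the agents other than `i` holding fewer than `maxT = k + 1/b` tokens, and one token
moves from `i` to `j`. -/
def postKernel (n : ℕ) (maxT : ℚ) (s s' : Fin n → ℚ) : ℚ :=
  ∑ i : Fin n, ∑ j : Fin n,
    if i ≠ j ∧ 1 ≤ s i ∧ s j < maxT ∧
        s' = Function.update (Function.update s i (s i - 1)) j (s j + 1) then
      (1 / (n : ℚ)) *
        (1 / ((univ.filter (fun l : Fin n => l ≠ i ∧ s l < maxT)).card : ℚ))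
    else 0

section Transfer

variable {ι α : Type*} [DecidableEq ι]

def transfer [Ring α] (s : ι → α) (i j : ι) : ι → α :=
  Function.update (Function.update s i (s i - 1)) j (s j + 1)

section Ring

variable [Ring α] {s : ι → α} {i j : ι}

@[simp]
theorem transfer_apply_right : transfer s i j j = s j + 1 :=
  Function.update_self _ _ _

@[simp]
theorem transfer_apply_left (hij : i ≠ j) : transfer s i j i = s i - 1 := by
  simp [transfer, Function.update_of_ne hij]

theorem transfer_apply_of_ne {l : ι} (hli : l ≠ i) (hlj : l ≠ j) : transfer s i j l = s l := by
  simp [transfer, Function.update_of_ne hlj, Function.update_of_ne hli]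

theorem transfer_transfer (hij : i ≠ j) : transfer (transfer s i j) j i = s := by
  funext l
  rcases eq_or_ne l i with rfl | hli
  · simp [hij]
  rcases eq_or_ne l j with rfl | hlj
  · simp [hij.symm]
  · rw [transfer_apply_of_ne hlj hli, transfer_apply_of_ne hli hlj]

end Ring

theorem transfer_eq_transfer_iff [CommRing α] [CharZero α] {s : ι → α}
    {i j i' j' : ι} (hij : i ≠ j) (hij' : i' ≠ j') :
    transfer s i j = transfer s i' j' ↔ i = i' ∧ j = j' := by
  refine ⟨fun h => ?_, fun ⟨hi, hj⟩ => hi ▸ hj ▸ rfl⟩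
  have hi : i = i' := by
    by_contra hii'
    have h_i := congrFun h i
    rw [transfer_apply_left hij] at h_i
    rcases eq_or_ne i j' with rfl | hij''
    · rw [transfer_apply_right] at h_i
      grind
    · rw [transfer_apply_of_ne hii' hij''] at h_i
      grind
  subst hi
  refine ⟨rfl, ?_⟩
  by_contra hjj'
  have h_j := congrFun h j
  rw [transfer_apply_right, transfer_apply_of_ne hij.symm hjj'] at h_j
  grind

def recipients [Fintype ι] [LT α] [DecidableLT α] (s : ι → α) (M : α) (i : ι) :
    Finset ι :=
  univ.filter (fun l => l ≠ i ∧ s l < M)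

theorem recipients_transfer [Fintype ι] [Ring α] [LT α] [DecidableLT α] {s : ι → α} {M : α}
    {i j : ι} (hij : i ≠ j) (hi : s i - 1 < M) (hj : s j < M) :
    recipients (transfer s i j) M j = (recipients s M i).map (Equiv.swap i j).toEmbedding := by
  ext l
  rw [mem_map_equiv, Equiv.symm_swap]
  simp only [recipients, mem_filter, mem_univ, true_and]
  rcases eq_or_ne l i with rfl | hli
  · simp [hij, hij.symm, hi, hj]
  rcases eq_or_ne l j with rfl | hlj
  · simp
  · rw [Equiv.swap_apply_of_ne_of_ne hli hlj, transfer_apply_of_ne hli hlj]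
    tauto

end Transfer

theorem postKernel_transfer {n : ℕ} {M : ℚ} {s : Fin n → ℚ} {i j : Fin n} (hij : i ≠ j)
    (hi : 1 ≤ s i) (hj : s j < M) :
    postKernel n M s (transfer s i j) = 1 / n * (1 / (recipients s M i).card) := by
  unfold postKernel
  rw [← Fintype.sum_prod_type', Fintype.sum_eq_single (i, j)]
  · exact if_pos ⟨hij, hi, hj, rfl⟩
  · rintro ⟨i', j'⟩ hne
    refine if_neg ?_
    rintro ⟨hij', -, -, h⟩
    apply hne
    obtain ⟨rfl, rfl⟩ := (transfer_eq_transfer_iff hij hij').1 h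
    rfl

theorem post_transition_reversible_general (n : ℕ) (k b : ℚ) (s : Fin n → ℚ)
    (hbound : ∀ l, 0 ≤ s l ∧ s l ≤ k + 1 / b) (i j : Fin n) (hij : i ≠ j)
    (hi : 1 ≤ s i) (hj : s j < k + 1 / b)
    (s' : Fin n → ℚ)
    (hs' : s' = Function.update (Function.update s i (s i - 1)) j (s j + 1))
    (m : ℕ)
    (hm : m = (Finset.univ.filter (fun l : Fin n => l ≠ i ∧ s l < k + 1 / b)).card) :
    postKernel n (k + 1 / b) s s' = 1 / ((n : ℚ) * m) ∧
    postKernel n (k + 1 / b) s' s = 1 / ((n : ℚ) * m) := by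
  change s' = transfer s i j at hs'
  change m = (recipients s (k + 1 / b) i).card at hm
  subst hs' hm
  have hi_after : s i - 1 < k + 1 / b := by linarith [(hbound i).2]
  have hj_after : 1 ≤ s j + 1 := by linarith [(hbound j).1]
  have forward := postKernel_transfer hij hi hj
  have backward := postKernel_transfer (s := transfer s i j) hij.symm
    (by rwa [transfer_apply_right]) (by rwa [transfer_apply_left hij])
  rw [transfer_transfer hij, recipients_transfer hij hi_after hj, card_map] at backward
  rw [forward, backward, one_div_mul_one_div]
  exact ⟨rfl, rfl⟩

/-- Posting transitions are reversible: if `s'` is obtained from `s` by the poster `i`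
giving one token to `j` (with `j` holding fewer than `k + 1/b` tokens in `s`), then
`P(s,s') = P(s',s) = 1/(n·m)`, where `m` is the number of agents other than the payer
holding fewer than `k + 1/b` tokens. -/
theorem post_transition_reversible (n : ℕ) (hn : 2 ≤ n) (k b : ℚ) (hk : 1 ≤ k)
    (hb0 : 0 < b) (hb1 : b ≤ 1) (s : Fin n → ℚ)
    (hbound : ∀ l, 0 ≤ s l ∧ s l ≤ k + 1 / b) (i j : Fin n) (hij : i ≠ j)
    (hi : 1 ≤ s i) (hj : s j < k + 1 / b)
    (s' : Fin n → ℚ)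
    (hs' : s' = Function.update (Function.update s i (s i - 1)) j (s j + 1))
    (m : ℕ)
    (hm : m = (Finset.univ.filter (fun l : Fin n => l ≠ i ∧ s l < k + 1 / b)).card) :
    postKernel n (k + 1 / b) s s' = 1 / ((n : ℚ) * m) ∧
    postKernel n (k + 1 / b) s' s = 1 / ((n : ℚ) * m) :=
  post_transition_reversible_general n k b s hbound i j hij hi hj s' hs' m hm
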